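/- arXiv:math/0507399 — 7 statements merged into one kernel-verified Lean document; each statement's English description precedes it below -/
import Mathlib

section
/- Let X, Y ∈ GL_n(k) with X² = Y³ = I such that Λ = XYXY² and Γ = XY²XY commute. Then (XY)⁶ = I and (YX)⁶ = I. -/
/-!
With `Λ = x y x y²` and `Γ = x y² x y` one has `Λ Γ = x y (x y²)³ y²` and `Γ Λ = x y² (x y)³ y`,
so `Λ Γ = Γ Λ` says exactly `(x y²)³ = (y x)³`. Since `x y² = (y x)⁻¹`, this forces `(y x)⁶ = 1`,
and `(x y)⁶ = x (y x)⁶ x` follows.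
-/

section Monoid

variable {M : Type*} [Monoid M] {x y : M}

lemma mul_sq_mul_mul_eq_one (hx : x ^ 2 = 1) (hy : y ^ 3 = 1) : x * y ^ 2 * (y * x) = 1 := by
  rw [mul_assoc, ← mul_assoc (y ^ 2), ← pow_succ, hy, one_mul, ← sq, hx]

lemma mul_sq_pow_three_eq_of_commute (hx : x ^ 2 = 1) (hy : y ^ 3 = 1)
    (h : Commute (x * y * x * y ^ 2) (x * y ^ 2 * x * y)) :
    (x * y ^ 2) ^ 3 = (y * x) ^ 3 := by
  have hxx : ∀ w : M, x * (x * w) = w := fun w => by rw [← mul_assoc, ← sq, hx, one_mul]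
  have hyyy : ∀ w : M, y * (y * (y * w)) = w := fun w => by
    rw [← mul_assoc, ← mul_assoc, ← sq, ← pow_succ, hy, one_mul]
  have hyyy' : y * (y * y) = 1 := by rw [← sq, ← pow_succ', hy]
  have hΛΓ : x * y * x * y ^ 2 * (x * y ^ 2 * x * y) = x * y * (x * y ^ 2) ^ 3 * y ^ 2 := by
    simp only [pow_succ, pow_zero, one_mul, mul_assoc, hyyy', mul_one]
  have hΓΛ : x * y ^ 2 * x * y * (x * y * x * y ^ 2) = x * y ^ 2 * (x * y) ^ 3 * y := by
    simp only [pow_succ, pow_zero, one_mul, mul_assoc]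
  calc (x * y ^ 2) ^ 3 = y ^ 2 * x * (x * y * (x * y ^ 2) ^ 3 * y ^ 2) * y := by
        simp only [pow_succ, pow_zero, one_mul, mul_assoc, hxx, hyyy, hyyy', mul_one]
    _ = y ^ 2 * x * (x * y ^ 2 * (x * y) ^ 3 * y) * y := by rw [← hΛΓ, h.eq, hΓΛ]
    _ = (y * x) ^ 3 := by
        simp only [pow_succ, pow_zero, one_mul, mul_assoc, hxx, hyyy, hyyy', mul_one]

theorem mul_pow_six_eq_one_of_commute (hx : x ^ 2 = 1) (hy : y ^ 3 = 1)
    (h : Commute (x * y * x * y ^ 2) (x * y ^ 2 * x * y)) :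
    (x * y) ^ 6 = 1 ∧ (y * x) ^ 6 = 1 := by
  have hyx : (y * x) ^ 6 = 1 :=
    calc (y * x) ^ 6 = (x * y ^ 2) ^ 3 * (y * x) ^ 3 := by
          rw [mul_sq_pow_three_eq_of_commute hx hy h, ← pow_add]
      _ = 1 := pow_mul_pow_eq_one 3 (mul_sq_mul_mul_eq_one hx hy)
  refine ⟨?_, hyx⟩
  calc (x * y) ^ 6 = (x * y) ^ 6 * x * x := by rw [mul_assoc, ← sq, hx, mul_one]
    _ = 1 := by rw [mul_pow_mul, hyx, mul_one, ← sq, hx]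

end Monoid

theorem stmt_5_general {k : Type*} [Field k] {n : ℕ}
    (X Y : Matrix (Fin n) (Fin n) k)
    (hX2 : X ^ 2 = 1) (hY3 : Y ^ 3 = 1)
    (hcomm : (X * Y * X * Y ^ 2) * (X * Y ^ 2 * X * Y)
           = (X * Y ^ 2 * X * Y) * (X * Y * X * Y ^ 2)) :
    (X * Y) ^ 6 = 1 ∧ (Y * X) ^ 6 = 1 :=
  mul_pow_six_eq_one_of_commute hX2 hY3 hcomm

theorem stmt_5 {k : Type*} [Field k] {n : ℕ}
    (X Y : Matrix (Fin n) (Fin n) k) (hX : IsUnit X) (hY : IsUnit Y)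
    (hX2 : X ^ 2 = 1) (hY3 : Y ^ 3 = 1)
    (hcomm : (X * Y * X * Y ^ 2) * (X * Y ^ 2 * X * Y)
           = (X * Y ^ 2 * X * Y) * (X * Y * X * Y ^ 2)) :
    (X * Y) ^ 6 = 1 ∧ (Y * X) ^ 6 = 1 :=
  stmt_5_general X Y hX2 hY3 hcomm
end

section
/- Let X, Y ∈ GL_n(k) with X² = Y³ = I, Λ = XYXY² diagonal, and Γ = XY²XY diagonal. If X has a nonzero entry in position (i,j), then Λ_{ii} · Λ_{jj} = 1. -/
/-!
Put `Λ = XYXY²`. Using `X² = 1` and `Y³ = 1`, the word `ΛXΛ` collapses back to `X`. Since `Λ` is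
diagonal, the `(i, j)` entry of `ΛXΛ` is `Λᵢᵢ Xᵢⱼ Λⱼⱼ`, so `Xᵢⱼ = Λᵢᵢ Λⱼⱼ Xᵢⱼ` and cancelling
`Xᵢⱼ ≠ 0` gives `Λᵢᵢ Λⱼⱼ = 1`.
-/

open Matrix

theorem mul_mul_mul_sq_mul_mul_mul_mul_sq {M : Type*} [Monoid M] {x y : M}
    (hx : x ^ 2 = 1) (hy : y ^ 3 = 1) :
    x * y * x * y ^ 2 * x * (x * y * x * y ^ 2) = x := by
  have hxx : x * x = 1 := by rw [← sq, hx]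
  have hyy : y ^ 2 * y = 1 := by rw [← pow_succ, hy]
  calc x * y * x * y ^ 2 * x * (x * y * x * y ^ 2)
      = x * y * x * (y ^ 2 * (x * x) * y) * x * y ^ 2 := by simp only [mul_assoc]
    _ = x * y * x * x * y ^ 2 := by rw [hxx, mul_one, hyy, mul_one]
    _ = x * y * (x * x) * y ^ 2 := by simp only [mul_assoc]
    _ = x * (y ^ 2 * y) := by rw [hxx, mul_one, mul_assoc, ← pow_succ', pow_succ]
    _ = x := by rw [hyy, mul_one]

theorem Matrix.IsDiag.mul_mul_apply {n R : Type*} [Fintype n] [DecidableEq n] [Semiring R]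
    {D : Matrix n n R} (hD : D.IsDiag) (A : Matrix n n R) (i j : n) :
    (D * A * D) i j = D i i * A i j * D j j := by
  conv_lhs => rw [← hD.diagonal_diag]
  simp only [mul_diagonal, diagonal_mul, diag_apply]

theorem stmt_6_general {k : Type*} [Field k] {n : ℕ}
    (X Y : Matrix (Fin n) (Fin n) k)
    (hX2 : X ^ 2 = 1) (hY3 : Y ^ 3 = 1)
    (hΛ : (X * Y * X * Y ^ 2).IsDiag)
    (i j : Fin n) (hij : X i j ≠ 0) :
    (X * Y * X * Y ^ 2) i i * (X * Y * X * Y ^ 2) j j = 1 := by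
  set Λ := X * Y * X * Y ^ 2
  have hentry : Λ i i * X i j * Λ j j = X i j := by
    rw [← hΛ.mul_mul_apply, mul_mul_mul_sq_mul_mul_mul_mul_sq hX2 hY3]
  refine mul_right_cancel₀ hij ?_
  linear_combination hentry

theorem stmt_6 {k : Type*} [Field k] {n : ℕ}
    (X Y : Matrix (Fin n) (Fin n) k) (hX : IsUnit X) (hY : IsUnit Y)
    (hX2 : X ^ 2 = 1) (hY3 : Y ^ 3 = 1)
    (hΛ : (X * Y * X * Y ^ 2).IsDiag) (hΓ : (X * Y ^ 2 * X * Y).IsDiag)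
    (i j : Fin n) (hij : X i j ≠ 0) :
    (X * Y * X * Y ^ 2) i i * (X * Y * X * Y ^ 2) j j = 1 :=
  stmt_6_general X Y hX2 hY3 hΛ i j hij
end

section
/- Let X, Y ∈ GL_2(k) over an algebraically closed field k with X² = Y³ = I, such that Λ = XYXY² and Γ = XY²XY are diagonal, and the pair (X,Y) spans M_2(k) as a k-algebra. Then both X and Y have exactly one nonzero entry per row and per column. -/
/-!
Put `Λ' := Y X Y² X`. From `X² = Y³ = 1` one gets `Λ Λ' = 1`, `X Λ = Λ' X` and `Y Γ = Λ' Y`, so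
`Λ'` is diagonal and `X`, `Y` intertwine diagonal matrices. An invertible matrix `M` with
`M D = E M` for diagonal `D`, `E` can only have `M i j ≠ 0` when `D j j = E i i`; if the two
entries of `D` differ, `M` is monomial.

It remains to see that `Λ` is not scalar. If `Λ = c`, then `X Y X⁻¹ = c Y`; cubing gives
`c³ = 1` and taking determinants gives `c² = 1`, so `c = 1` and `X` commutes with `Y`, which is
impossible since they generate the noncommutative algebra `M₂(k)`. As `(Y²)² = Y`, `Γ` is the `Λ`
of the pair `(X, Y²)`, which does not commute either.
-/

open Matrix

def Matrix.IsMonomial {m n R : Type*} [Zero R] (M : Matrix m n R) : Prop :=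
  (∀ i, ∃! j, M i j ≠ 0) ∧ (∀ j, ∃! i, M i j ≠ 0)

theorem Algebra.commute_of_adjoin_pair_eq_top {R A : Type*} [CommSemiring R] [Semiring A]
    [Algebra R A] {x y : A} (h : Algebra.adjoin R {x, y} = ⊤) (hxy : Commute x y) (a b : A) :
    Commute a b := by
  have hle := Algebra.adjoin_le_centralizer_centralizer R ({x, y} : Set A)
  rw [h] at hle
  refine Set.centralizer_centralizer_comm_of_comm ?_ a (hle trivial) b (hle trivial)
  simp only [Set.mem_insert_iff, Set.mem_singleton_iff]
  rintro _ (rfl | rfl) _ (rfl | rfl)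
  exacts [rfl, hxy.eq, hxy.symm.eq, rfl]

theorem Matrix.not_commute_single_single {n R : Type*} [Fintype n] [DecidableEq n] [Semiring R]
    [Nontrivial R] {i j : n} (hij : i ≠ j) : ¬ Commute (single i j (1 : R)) (single j i 1) := by
  intro h
  simpa [hij] using congrFun (congrFun h.eq i) i

theorem Matrix.not_commute_of_adjoin_eq_top {n R : Type*} [Fintype n] [DecidableEq n]
    [Nontrivial n] [CommRing R] [Nontrivial R] {X Y : Matrix n n R}
    (h : Algebra.adjoin R {X, Y} = ⊤) : ¬ Commute X Y := fun hXY =>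
  have ⟨_, _, hij⟩ := exists_pair_ne n
  not_commute_single_single hij (Algebra.commute_of_adjoin_pair_eq_top h hXY _ _)

section Intertwine

variable {n R : Type*} [Fintype n] [DecidableEq n] {M D E : Matrix n n R}

theorem Matrix.IsDiag.apply_mul_eq_of_mul_eq [CommSemiring R] (hD : D.IsDiag) (hE : E.IsDiag)
    (h : M * D = E * M) (i j : n) : M i j * D j j = E i i * M i j := by
  rw [← hD.diagonal_diag, ← hE.diagonal_diag] at h
  simpa [mul_diagonal, diagonal_mul] using congrFun (congrFun h i) j

theorem Matrix.IsDiag.apply_eq_zero_or_of_mul_eq [CommRing R] [IsDomain R] (hD : D.IsDiag)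
    (hE : E.IsDiag) (h : M * D = E * M) (i : n) {j j' : n} (hne : D j j ≠ D j' j') :
    M i j = 0 ∨ M i j' = 0 := by
  by_contra! hM
  have hj := hD.apply_mul_eq_of_mul_eq hE h i j
  have hj' := hD.apply_mul_eq_of_mul_eq hE h i j'
  rw [mul_comm (E i i)] at hj hj'
  exact hne ((mul_left_cancel₀ hM.1 hj).trans (mul_left_cancel₀ hM.2 hj').symm)

end Intertwine

theorem Matrix.isMonomial_of_det_ne_zero {R : Type*} [CommRing R] {M : Matrix (Fin 2) (Fin 2) R}
    (hdet : M.det ≠ 0) (h0 : M 0 0 = 0 ∨ M 0 1 = 0) (h1 : M 1 0 = 0 ∨ M 1 1 = 0) :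
    M.IsMonomial := by
  rw [det_fin_two] at hdet
  rcases h0 with h0 | h0 <;> rcases h1 with h1 | h1 <;>
    simp only [h0, h1, mul_zero, zero_mul, sub_zero, zero_sub, neg_ne_zero, ne_eq,
      not_true_eq_false] at hdet <;>
    have := left_ne_zero_of_mul hdet <;> have := right_ne_zero_of_mul hdet <;>
    simp_all [IsMonomial, Fin.forall_fin_two, Fin.exists_fin_two, ExistsUnique]

theorem Matrix.isMonomial_of_mul_eq {R : Type*} [CommRing R] [IsDomain R]
    {M D E : Matrix (Fin 2) (Fin 2) R} (hdet : M.det ≠ 0) (hD : D.IsDiag) (hE : E.IsDiag)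
    (hne : D 0 0 ≠ D 1 1) (h : M * D = E * M) : M.IsMonomial :=
  isMonomial_of_det_ne_zero hdet (hD.apply_eq_zero_or_of_mul_eq hE h 0 hne)
    (hD.apply_eq_zero_or_of_mul_eq hE h 1 hne)

theorem Matrix.IsDiag.of_mul_eq_one {n R : Type*} [Fintype n] [DecidableEq n] [CommRing R]
    {D E : Matrix n n R} (hD : D.IsDiag) (h : D * E = 1) : E.IsDiag := by
  rw [← inv_eq_right_inv h, ← hD.diagonal_diag, inv_diagonal]
  exact isDiag_diagonal _

theorem Matrix.IsDiag.eq_smul_one_of_apply_eq {R : Type*} [Semiring R]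
    {A : Matrix (Fin 2) (Fin 2) R} (hA : A.IsDiag) (h : A 0 0 = A 1 1) : A = A 0 0 • 1 := by
  ext i j
  fin_cases i <;> fin_cases j <;> simp [h] <;> exact hA (by decide)

section Words

variable {G : Type*} [Monoid G] {x y : G}

theorem mul_mul_mul_sq_mul_eq_one (hx : x ^ 2 = 1) (hy : y ^ 3 = 1) :
    x * y * x * y ^ 2 * (y * x * y ^ 2 * x) = 1 := by
  rw [pow_two] at hx
  rw [pow_succ, pow_two] at hy
  have hx' (z : G) : x * (x * z) = z := by rw [← mul_assoc, hx, one_mul]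
  have hy' (z : G) : y * (y * (y * z)) = z := by rw [← mul_assoc, ← mul_assoc, hy, one_mul]
  simp only [pow_two, mul_assoc, hx', hy', hx]

theorem mul_mul_mul_mul_sq_eq (hx : x ^ 2 = 1) :
    x * (x * y * x * y ^ 2) = y * x * y ^ 2 * x * x := by
  simp only [mul_assoc, ← pow_two, hx, mul_one]
  rw [← mul_assoc x x, ← pow_two, hx, one_mul]

theorem pow_two_pow_two_of_pow_three_eq_one (hy : y ^ 3 = 1) : (y ^ 2) ^ 2 = y := by
  rw [← pow_mul, show 2 * 2 = 3 + 1 from rfl, pow_add, hy, one_mul, pow_one]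

end Words

theorem Matrix.det_ne_zero_of_pow_eq_one {n R : Type*} [Fintype n] [DecidableEq n] [CommRing R]
    [Nontrivial R] {M : Matrix n n R} {m : ℕ} (h : M ^ m = 1) (hm : m ≠ 0) : M.det ≠ 0 :=
  (isUnit_iff_isUnit_det M |>.mp (IsUnit.of_pow_eq_one h hm)).ne_zero

theorem Matrix.commute_of_mul_mul_eq_smul {K : Type*} [Field K] {X Y : Matrix (Fin 2) (Fin 2) K}
    {c : K} (hX : X ^ 2 = 1) (hY : Y ^ 3 = 1) (h : X * Y * X = c • Y) : Commute X Y := by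
  have hXX : X * X = 1 := by rw [← pow_two, hX]
  have hc3 : c ^ 3 = 1 := by
    have hcube : (X * Y * X) ^ 3 = X * Y ^ 3 * X := by
      calc (X * Y * X) ^ 3 = X * Y * (X * X) * Y * (X * X) * Y * X := by noncomm_ring
        _ = X * Y ^ 3 * X := by rw [hXX]; noncomm_ring
    rw [hY, mul_one, hXX, h, smul_pow, hY] at hcube
    simpa using congrFun (congrFun hcube 0) 0
  have hc2 : c ^ 2 = 1 := by
    have hdet := congrArg det h
    rw [det_mul, det_mul, det_smul, Fintype.card_fin, mul_right_comm, ← det_mul, ← pow_two, hX,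
      det_one, one_mul] at hdet
    exact mul_right_cancel₀ (det_ne_zero_of_pow_eq_one hY three_ne_zero)
      (hdet.symm.trans (one_mul _).symm)
  have hc : c = 1 := by linear_combination hc3 - c * hc2
  rw [hc, one_smul] at h
  calc X * Y = X * Y * X * X := by rw [mul_assoc _ X, hXX, mul_one]
    _ = Y * X := by rw [h]

theorem Matrix.apply_zero_zero_ne_of_not_commute {K : Type*} [Field K]
    {X Y : Matrix (Fin 2) (Fin 2) K} (hX : X ^ 2 = 1) (hY : Y ^ 3 = 1)
    (hΛ : (X * Y * X * Y ^ 2).IsDiag) (hXY : ¬ Commute X Y) :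
    (X * Y * X * Y ^ 2) 0 0 ≠ (X * Y * X * Y ^ 2) 1 1 := by
  intro heq
  have hscalar := hΛ.eq_smul_one_of_apply_eq heq
  generalize (X * Y * X * Y ^ 2) 0 0 = c at hscalar
  refine hXY (commute_of_mul_mul_eq_smul hX hY (c := c) ?_)
  calc X * Y * X = X * Y * X * Y ^ 2 * Y := by rw [mul_assoc _ (Y ^ 2), ← pow_succ, hY, mul_one]
    _ = c • Y := by rw [hscalar, smul_mul_assoc, one_mul]

theorem stmt_8_general {k : Type*} [Field k]
    (X Y : Matrix (Fin 2) (Fin 2) k)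
    (hX2 : X ^ 2 = 1) (hY3 : Y ^ 3 = 1)
    (hΛ : (X * Y * X * Y ^ 2).IsDiag) (hΓ : (X * Y ^ 2 * X * Y).IsDiag)
    (hirr : Algebra.adjoin k ({X, Y} : Set (Matrix (Fin 2) (Fin 2) k)) = ⊤) :
    (∀ i, ∃! j, X i j ≠ 0) ∧ (∀ j, ∃! i, X i j ≠ 0) ∧
    (∀ i, ∃! j, Y i j ≠ 0) ∧ (∀ j, ∃! i, Y i j ≠ 0) := by
  have hXY : ¬ Commute X Y := not_commute_of_adjoin_eq_top hirr
  have hY4 : (Y ^ 2) ^ 2 = Y := pow_two_pow_two_of_pow_three_eq_one hY3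
  have hY6 : (Y ^ 2) ^ 3 = 1 := by rw [← pow_mul, mul_comm, pow_mul, hY3, one_pow]
  have hXY2 : ¬ Commute X (Y ^ 2) := fun h => hXY (hY4 ▸ h.pow_right 2)
  have hΓ2 : (X * Y ^ 2 * X * (Y ^ 2) ^ 2).IsDiag := by rwa [hY4]
  have hΛ' : (Y * X * Y ^ 2 * X).IsDiag := hΛ.of_mul_eq_one (mul_mul_mul_sq_mul_eq_one hX2 hY3)
  have hX : X.IsMonomial := isMonomial_of_mul_eq (det_ne_zero_of_pow_eq_one hX2 two_ne_zero) hΛ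
    hΛ' (apply_zero_zero_ne_of_not_commute hX2 hY3 hΛ hXY) (mul_mul_mul_mul_sq_eq hX2)
  have hY : Y.IsMonomial := isMonomial_of_mul_eq (det_ne_zero_of_pow_eq_one hY3 three_ne_zero) hΓ2
    hΛ' (apply_zero_zero_ne_of_not_commute hX2 hY6 hΓ2 hXY2) (by rw [hY4]; simp only [mul_assoc])
  exact ⟨hX.1, hX.2, hY.1, hY.2⟩

theorem stmt_8 {k : Type*} [Field k] [IsAlgClosed k]
    (X Y : Matrix (Fin 2) (Fin 2) k) (hX : IsUnit X) (hY : IsUnit Y)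
    (hX2 : X ^ 2 = 1) (hY3 : Y ^ 3 = 1)
    (hΛ : (X * Y * X * Y ^ 2).IsDiag) (hΓ : (X * Y ^ 2 * X * Y).IsDiag)
    (hirr : Algebra.adjoin k ({X, Y} : Set (Matrix (Fin 2) (Fin 2) k)) = ⊤) :
    (∀ i, ∃! j, X i j ≠ 0) ∧ (∀ j, ∃! i, X i j ≠ 0) ∧
    (∀ i, ∃! j, Y i j ≠ 0) ∧ (∀ j, ∃! i, Y i j ≠ 0) :=
  stmt_8_general X Y hX2 hY3 hΛ hΓ hirr
end

section
/- Let k have characteristic ≠ 2, X = diag(-1,1,1), and Y the cyclic permutation matrix sending e₁→e₃, e₂→e₁, e₃→e₂ (i.e., Y has 1's in positions (1,2), (2,3), (3,1)). Then X² = Y³ = I, XYXY² and XY²XY are diagonal, and (X,Y) generates M_3(k) as a k-algebra. -/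
/-!
X² = Y³ = 1 and the diagonality of XYXY² and XY²XY are direct computations. For generation:
since 2 is invertible, (1 - X)/2 is the matrix unit E₀₀, and Y is the permutation matrix of the
3-cycle `finRotate 3`. Multiplying E₀₀ by powers of Y on the left and on the right moves its
row and its column around the cycle, so every matrix unit Eᵢⱼ, hence every matrix, lies in the
algebra generated by X and Y.
-/

open Matrix

namespace Matrix

variable {n R : Type*} [Fintype n] [DecidableEq n]

theorem permMatrix_mul_single [NonAssocSemiring R] (σ : Equiv.Perm n) (i j : n) (c : R) :
    σ.permMatrix R * single i j c = single (σ.symm i) j c := by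
  rw [PEquiv.toMatrix_toPEquiv_mul]
  exact submatrix_single_equiv σ (Equiv.refl n) i j c

theorem single_mul_permMatrix [NonAssocSemiring R] (σ : Equiv.Perm n) (i j : n) (c : R) :
    single i j c * σ.permMatrix R = single i (σ j) c := by
  rw [PEquiv.mul_toMatrix_toPEquiv]
  exact submatrix_single_equiv (Equiv.refl n) σ.symm i j c

theorem permMatrix_pow [Semiring R] (σ : Equiv.Perm n) (m : ℕ) :
    (σ ^ m).permMatrix R = σ.permMatrix R ^ m := by
  induction m with
  | zero => simp
  | succ m ih => rw [pow_succ', permMatrix_mul, ih, pow_succ]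

variable [CommSemiring R]

theorem subalgebra_eq_top_of_forall_single_mem {S : Subalgebra R (Matrix n n R)}
    (h : ∀ i j, single i j (1 : R) ∈ S) : S = ⊤ := by
  refine eq_top_iff.2 fun M _ => M.induction_on' S.zero_mem (fun _ _ => S.add_mem) fun i j c => ?_
  simpa [smul_single] using S.smul_mem (h i j) c

theorem subalgebra_eq_top_of_single_mem_of_permMatrix_mem {S : Subalgebra R (Matrix n n R)}
    {σ : Equiv.Perm n} {a : n} (ha : single a a (1 : R) ∈ S) (hσ : σ.permMatrix R ∈ S)
    (hcycle : ∀ i, σ.SameCycle a i) : S = ⊤ := by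
  have hpow (m : ℕ) : (σ ^ m).permMatrix R ∈ S := by
    rw [permMatrix_pow]
    exact pow_mem hσ m
  refine subalgebra_eq_top_of_forall_single_mem fun i j => ?_
  obtain ⟨p, hp⟩ := (hcycle i).symm.exists_nat_pow_eq
  obtain ⟨q, hq⟩ := (hcycle j).exists_nat_pow_eq
  have hi : single i a (1 : R) ∈ S := by
    simpa [permMatrix_mul_single, ← hp] using mul_mem (hpow p) ha
  have hj : single a j (1 : R) ∈ S := by
    simpa [single_mul_permMatrix, hq] using mul_mem ha (hpow q)
  simpa using mul_mem hi hj

end Matrix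

theorem stmt_12 {k : Type*} [Field k] (hchar : (2 : k) ≠ 0) :
    let X : Matrix (Fin 3) (Fin 3) k := !![-1, 0, 0; 0, 1, 0; 0, 0, 1]
    let Y : Matrix (Fin 3) (Fin 3) k := !![0, 1, 0; 0, 0, 1; 1, 0, 0]
    X ^ 2 = 1 ∧ Y ^ 3 = 1 ∧
    (X * Y * X * Y ^ 2).IsDiag ∧ (X * Y ^ 2 * X * Y).IsDiag ∧
    Algebra.adjoin k ({X, Y} : Set (Matrix (Fin 3) (Fin 3) k)) = ⊤ := by
  intro X Y
  have hXY : X * Y * X * Y ^ 2 = diagonal ![-1, 1, -1] := by simp [X, Y, sq, diagonal_fin_three]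
  have hXY' : X * Y ^ 2 * X * Y = diagonal ![-1, -1, 1] := by simp [X, Y, sq, diagonal_fin_three]
  have hY : Y = (finRotate 3).permMatrix k := by
    ext i j; fin_cases i <;> fin_cases j <;> rfl
  have hE : single 0 0 (1 : k) = (2 : k)⁻¹ • (1 - X) := by
    ext i j
    fin_cases i <;> fin_cases j <;>
      simp [X, one_apply, one_add_one_eq_two, inv_mul_cancel₀ hchar]
  refine ⟨by simp [X, sq, one_fin_three], by simp [Y, pow_succ, one_fin_three],
    hXY ▸ isDiag_diagonal _, hXY' ▸ isDiag_diagonal _, ?_⟩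
  set S := Algebra.adjoin k ({X, Y} : Set (Matrix (Fin 3) (Fin 3) k))
  have hXS : X ∈ S := Algebra.subset_adjoin (by simp)
  have hYS : Y ∈ S := Algebra.subset_adjoin (by simp)
  refine subalgebra_eq_top_of_single_mem_of_permMatrix_mem (a := 0) ?_ (hY ▸ hYS) fun i => ?_
  · exact hE ▸ S.smul_mem (S.sub_mem S.one_mem hXS) _
  · exact isCycle_finRotate.sameCycle (by decide) (by fin_cases i <;> decide)
end

section
/- There is no pair X, Y ∈ GL_3(k), k algebraically closed of characteristic 2, with X² = Y³ = I, both XYXY² and XY²XY diagonal, and (X,Y) generating M_3(k) as a k-algebra. -/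
/-!
Put `D = XYXY²` and `E = XY²XY`. From `X² = Y³ = 1` one gets `DXD = X`, `EXE = X`, `DYD = EY`
and `DYE = Y`. Since `D = diag(dᵢ)` and `E = diag(eᵢ)`, a nonzero entry `Xᵢⱼ` forces
`dᵢdⱼ = eᵢeⱼ = 1`, and a nonzero entry `Yᵢⱼ` forces `dᵢeⱼ = 1` and `dᵢdⱼ = eᵢ`. Hence the
coordinates `i` with `dᵢ = eᵢ = 1` span a subspace invariant under `X` and `Y`, which must be `0`
or everything. It is not `0`: some term `∏ⱼ X_{σ(j) j}` of `det X` is nonzero, and multiplying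
`d_{σ(j)} d_j = 1` along a `σ`-orbit of length 1 or 3 exhibits a square equal to `1`, so (in
characteristic 2) some `dᵢ = 1`, and likewise `eᵢ = 1` at the same `i`. Thus `D = 1`, which
makes `X` and `Y` commute, and commuting matrices cannot generate `M₃(k)`.
-/

open Matrix

section Relations

variable {G : Type*} [Monoid G] {x y : G}

lemma mul_mul_cancel_of_sq_eq_one (hx : x ^ 2 = 1) (g : G) : x * (x * g) = g := by
  rw [← mul_assoc, ← sq, hx, one_mul]

lemma mul_mul_mul_cancel_of_pow_three_eq_one (hy : y ^ 3 = 1) (g : G) :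
    y * (y * (y * g)) = g := by
  rw [← mul_assoc, ← mul_assoc, ← pow_three', hy, one_mul]

theorem xyxy2_mul_x_mul_xyxy2 (hx : x ^ 2 = 1) (hy : y ^ 3 = 1) :
    x * y * x * y ^ 2 * x * (x * y * x * y ^ 2) = x := by
  simp only [sq, mul_assoc, mul_mul_cancel_of_sq_eq_one hx,
    mul_mul_mul_cancel_of_pow_three_eq_one hy, ← pow_three, hy, mul_one]

theorem xy2xy_mul_x_mul_xy2xy (hx : x ^ 2 = 1) (hy : y ^ 3 = 1) :
    x * y ^ 2 * x * y * x * (x * y ^ 2 * x * y) = x := by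
  simp only [sq, mul_assoc, mul_mul_cancel_of_sq_eq_one hx,
    mul_mul_mul_cancel_of_pow_three_eq_one hy, ← pow_three, hy, mul_one]

theorem xyxy2_mul_y_mul_xyxy2 (hx : x ^ 2 = 1) (hy : y ^ 3 = 1) :
    x * y * x * y ^ 2 * y * (x * y * x * y ^ 2) = x * y ^ 2 * x * y * y := by
  simp only [sq, mul_assoc, mul_mul_cancel_of_sq_eq_one hx, ← pow_three, hy, mul_one]

theorem xyxy2_mul_y_mul_xy2xy (hx : x ^ 2 = 1) (hy : y ^ 3 = 1) :
    x * y * x * y ^ 2 * y * (x * y ^ 2 * x * y) = y := by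
  simp only [sq, mul_assoc, mul_mul_cancel_of_sq_eq_one hx,
    mul_mul_mul_cancel_of_pow_three_eq_one hy, ← pow_three, hy, mul_one]

theorem commute_of_xyxy2_eq_one (hx : x ^ 2 = 1) (hy : y ^ 3 = 1)
    (h : x * y * x * y ^ 2 = 1) : Commute x y := by
  have hxyx : x * y * x = y :=
    calc x * y * x = x * y * x * y ^ 2 * y := by rw [mul_assoc _ (y ^ 2), ← pow_succ, hy, mul_one]
      _ = y := by rw [h, one_mul]
  calc x * y = x * y * x * x := by rw [mul_assoc _ x x, ← sq, hx, mul_one]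
    _ = y * x := by rw [hxyx]

end Relations

theorem CharTwo.eq_one_of_mul_self_eq_one {R : Type*} [CommRing R] [CharP R 2]
    [NoZeroDivisors R] {a : R} (h : a * a = 1) : a = 1 :=
  CharTwo.sq_injective (by simpa [sq] using h)

theorem apply_apply_eq_one_of_apply_perm_mul_eq_one {ι R : Type*} [CommRing R] [CharP R 2]
    [NoZeroDivisors R] {σ : Equiv.Perm ι} {f : ι → R} (hf : ∀ j, f (σ j) * f j = 1) {i : ι}
    (hi : σ (σ (σ i)) = i) : f (σ (σ i)) = 1 := by
  have hprod : f (σ (σ i)) * f (σ i) * f i = 1 := by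
    apply CharTwo.eq_one_of_mul_self_eq_one
    calc f (σ (σ i)) * f (σ i) * f i * (f (σ (σ i)) * f (σ i) * f i)
        = f (σ (σ (σ i))) * f (σ (σ i)) * (f (σ (σ i)) * f (σ i)) * (f (σ i) * f i) := by
          rw [hi]; ring
      _ = 1 := by rw [hf, hf, hf, one_mul, one_mul]
  rwa [mul_assoc, hf, mul_one] at hprod

theorem Equiv.Perm.exists_apply_apply_apply_eq_self (σ : Equiv.Perm (Fin 3)) :
    ∃ i, σ (σ (σ i)) = i := by
  revert σ; decide

namespace Matrix

variable {n R : Type*} [Fintype n] [DecidableEq n] [CommRing R]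

theorem exists_perm_forall_apply_ne_zero_of_det_ne_zero {M : Matrix n n R} (h : M.det ≠ 0) :
    ∃ σ : Equiv.Perm n, ∀ i, M (σ i) i ≠ 0 := by
  contrapose! h
  rw [det_apply]
  refine Finset.sum_eq_zero fun σ _ => ?_
  obtain ⟨i, hi⟩ := h σ
  rw [Finset.prod_eq_zero (f := fun j => M (σ j) j) (Finset.mem_univ i) hi, smul_zero]

theorem mul_eq_of_diagonal_mul_mul_diagonal_eq [NoZeroDivisors R] {a b c : n → R}
    {M : Matrix n n R} (h : diagonal a * M * diagonal b = diagonal c * M) {i j : n}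
    (hij : M i j ≠ 0) : a i * b j = c i := by
  have hij' := congrFun (congrFun h i) j
  rw [mul_diagonal, diagonal_mul, diagonal_mul] at hij'
  exact mul_right_cancel₀ hij (by linear_combination hij')

theorem mul_eq_one_of_diagonal_mul_mul_diagonal_eq_self [NoZeroDivisors R] {a b : n → R}
    {M : Matrix n n R} (h : diagonal a * M * diagonal b = M) {i j : n} (hij : M i j ≠ 0) :
    a i * b j = 1 :=
  mul_eq_of_diagonal_mul_mul_diagonal_eq (c := 1) (by simpa using h) hij

theorem BlockTriangular.le_of_adjoin_eq_top [Nontrivial R] {α : Type*} [LinearOrder α]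
    {b : n → α} {s : Set (Matrix n n R)} (hs : ∀ M ∈ s, M.BlockTriangular b)
    (htop : Algebra.adjoin R s = ⊤) (i j : n) : b i ≤ b j := by
  have hle : Algebra.adjoin R s ≤ blockTriangularSubalgebra R R b := Algebra.adjoin_le hs
  rw [htop] at hle
  by_contra! hji
  simpa using hle (Algebra.mem_top (x := single i j 1)) hji

theorem adjoin_ne_top_of_commute [Nontrivial n] [Nontrivial R] {x y : Matrix n n R}
    (h : Commute x y) : Algebra.adjoin R {x, y} ≠ ⊤ := by
  intro htop
  have hmem (a : Matrix n n R) : a ∈ Algebra.adjoin R {x, y} := htop ▸ Algebra.mem_top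
  have hx (a : Matrix n n R) : Commute x a :=
    Algebra.commute_of_mem_adjoin_of_forall_mem_commute (hmem a) (by simp [h])
  have hy (a : Matrix n n R) : Commute y a :=
    Algebra.commute_of_mem_adjoin_of_forall_mem_commute (hmem a) (by simp [h.symm])
  have hall (a b : Matrix n n R) : Commute a b :=
    Algebra.commute_of_mem_adjoin_of_forall_mem_commute (hmem b)
      (by simp [(hx a).symm, (hy a).symm])
  obtain ⟨i, j, hij⟩ := exists_pair_ne n
  simpa [hij] using congrFun (congrFun (hall (single i j (1 : R)) (single j i 1)).eq i) i

end Matrix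

theorem stmt_13_general {k : Type*} [Field k] [CharP k 2] :
    ¬ ∃ X Y : Matrix (Fin 3) (Fin 3) k,
      IsUnit X ∧ IsUnit Y ∧ X ^ 2 = 1 ∧ Y ^ 3 = 1 ∧
      (X * Y * X * Y ^ 2).IsDiag ∧ (X * Y ^ 2 * X * Y).IsDiag ∧
      Algebra.adjoin k ({X, Y} : Set (Matrix (Fin 3) (Fin 3) k)) = ⊤ := by
  rintro ⟨X, Y, hXu, -, hX, hY, hD, hE, hadj⟩
  set d := (X * Y * X * Y ^ 2).diag
  set e := (X * Y ^ 2 * X * Y).diag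
  have hDd : X * Y * X * Y ^ 2 = diagonal d := hD.diagonal_diag.symm
  have hEe : X * Y ^ 2 * X * Y = diagonal e := hE.diagonal_diag.symm
  have hXd {i j} : X i j ≠ 0 → d i * d j = 1 :=
    mul_eq_one_of_diagonal_mul_mul_diagonal_eq_self (by rw [← hDd, xyxy2_mul_x_mul_xyxy2 hX hY])
  have hXe {i j} : X i j ≠ 0 → e i * e j = 1 :=
    mul_eq_one_of_diagonal_mul_mul_diagonal_eq_self (by rw [← hEe, xy2xy_mul_x_mul_xy2xy hX hY])
  have hYd {i j} : Y i j ≠ 0 → d i * d j = e i :=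
    mul_eq_of_diagonal_mul_mul_diagonal_eq (by rw [← hDd, ← hEe, xyxy2_mul_y_mul_xyxy2 hX hY])
  have hYe {i j} : Y i j ≠ 0 → d i * e j = 1 :=
    mul_eq_one_of_diagonal_mul_mul_diagonal_eq_self
      (by rw [← hDd, ← hEe, xyxy2_mul_y_mul_xy2xy hX hY])
  obtain ⟨σ, hσ⟩ :=
    exists_perm_forall_apply_ne_zero_of_det_ne_zero ((isUnit_iff_isUnit_det X).mp hXu).ne_zero
  obtain ⟨i, hi⟩ := σ.exists_apply_apply_apply_eq_self
  have hd₀ := apply_apply_eq_one_of_apply_perm_mul_eq_one (fun j => hXd (hσ j)) hi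
  have he₀ := apply_apply_eq_one_of_apply_perm_mul_eq_one (fun j => hXe (hσ j)) hi
  -- in the order `False < True` on `Prop`, this says the coordinates with `dᵢ = eᵢ = 1` span an
  -- invariant subspace
  have hbt : ∀ M ∈ ({X, Y} : Set (Matrix (Fin 3) (Fin 3) k)),
      M.BlockTriangular fun i => d i = 1 ∧ e i = 1 := by
    rintro M (rfl | rfl) i j ⟨-, hij⟩ <;> refine by_contra fun hM => hij fun ⟨hdi, hei⟩ => ?_
    · exact ⟨by simpa [hdi] using hXd hM, by simpa [hei] using hXe hM⟩
    · exact ⟨by simpa [hdi, hei] using hYd hM, by simpa [hdi] using hYe hM⟩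
  have hd : d = 1 :=
    funext fun j => (BlockTriangular.le_of_adjoin_eq_top hbt hadj _ j ⟨hd₀, he₀⟩).1
  exact adjoin_ne_top_of_commute
    (commute_of_xyxy2_eq_one hX hY (by rw [hDd, hd]; exact diagonal_one)) hadj

theorem stmt_13 {k : Type*} [Field k] [IsAlgClosed k] [CharP k 2] :
    ¬ ∃ X Y : Matrix (Fin 3) (Fin 3) k,
      IsUnit X ∧ IsUnit Y ∧ X ^ 2 = 1 ∧ Y ^ 3 = 1 ∧
      (X * Y * X * Y ^ 2).IsDiag ∧ (X * Y ^ 2 * X * Y).IsDiag ∧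
      Algebra.adjoin k ({X, Y} : Set (Matrix (Fin 3) (Fin 3) k)) = ⊤ :=
  stmt_13_general
end

section
/- Let A, B ∈ M_n(k) satisfy A² = B², ABA = BAB, and A⁶ = B⁶ = I. Then the k-subalgebra of M_n(k) generated by A and B has dimension at most 18. -/
/-!
Put `z = a²`. Since `a² = b²`, `z` commutes with `a` and `b`, and modulo `z` the relations
`a² = b² = 1`, `aba = bab` present the symmetric group `S₃`. So every word in `a` and `b` equals
`zⁱ w` with `w` one of the six lifts `1, a, b, ab, ba, aba` of the elements of `S₃`, and since
`z³ = a⁶ = 1` at most 18 such products occur. They span the algebra generated by `A` and `B`.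
-/

open Pointwise

theorem Submonoid.closure_subset_mul_of_mul_mem {M : Type*} [Monoid M] {s S : Set M}
    {Z : Submonoid M} (hS : 1 ∈ S) (hmul : ∀ w ∈ S, ∀ x ∈ s, w * x ∈ (Z : Set M) * S) :
    (Submonoid.closure s : Set M) ⊆ (Z : Set M) * S := by
  intro x hx
  induction hx using Submonoid.closure_induction_right with
  | one => exact Set.mem_mul.2 ⟨1, Z.one_mem, 1, hS, one_mul 1⟩
  | mul_right x _ y hy ih =>
    obtain ⟨p, hp, w, hw, rfl⟩ := Set.mem_mul.1 ih
    obtain ⟨q, hq, w', hw', hwy⟩ := Set.mem_mul.1 (hmul w hw y hy)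
    exact Set.mem_mul.2 ⟨p * q, Z.mul_mem hp hq, w', hw', by rw [mul_assoc, hwy, mul_assoc]⟩

theorem Submonoid.coe_powers_subset_of_pow_three_eq_one {M : Type*} [Monoid M] {z : M}
    (hz : z ^ 3 = 1) : (Submonoid.powers z : Set M) ⊆ {1, z, z ^ 2} := by
  rintro _ ⟨m, rfl⟩
  show z ^ m ∈ _
  rw [pow_eq_pow_mod m hz]
  have : m % 3 < 3 := Nat.mod_lt _ (by norm_num)
  interval_cases m % 3 <;> simp

section BraidRelations

variable {M : Type*} [Monoid M] {a b : M}

def braidWords (a b : M) : Set M := {1, a, b, a * b, b * a, a * b * a}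

theorem braidWords_mul_mem (h2 : a ^ 2 = b ^ 2) (hbraid : a * b * a = b * a * b) :
    ∀ w ∈ braidWords a b, ∀ x ∈ ({a, b} : Set M),
      w * x ∈ (Submonoid.powers (a ^ 2) : Set M) * braidWords a b := by
  have hza : Commute (a ^ 2) a := Commute.pow_self a 2
  have hzb : Commute (a ^ 2) b := h2 ▸ Commute.pow_self b 2
  have word : ∀ {y} w, w ∈ braidWords a b → y = w →
      y ∈ (Submonoid.powers (a ^ 2) : Set M) * braidWords a b :=
    fun w hw hy => Set.mem_mul.2 ⟨1, one_mem _, w, hw, by rw [one_mul, hy]⟩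
  have zword : ∀ {y} w, w ∈ braidWords a b → y = a ^ 2 * w →
      y ∈ (Submonoid.powers (a ^ 2) : Set M) * braidWords a b :=
    fun w hw hy => Set.mem_mul.2 ⟨a ^ 2, Submonoid.mem_powers _, w, hw, hy.symm⟩
  simp only [braidWords, Set.forall_mem_insert, Set.mem_singleton_iff, forall_eq]
  refine ⟨⟨?_, ?_⟩, ⟨?_, ?_⟩, ⟨?_, ?_⟩, ⟨?_, ?_⟩, ⟨?_, ?_⟩, ⟨?_, ?_⟩⟩
  · exact word a (by simp [braidWords]) (one_mul a)
  · exact word b (by simp [braidWords]) (one_mul b)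
  · exact zword 1 (by simp [braidWords]) (by rw [mul_one, sq])
  · exact word (a * b) (by simp [braidWords]) rfl
  · exact word (b * a) (by simp [braidWords]) rfl
  · exact zword 1 (by simp [braidWords]) (by rw [mul_one, h2, sq])
  · exact word (a * b * a) (by simp [braidWords]) rfl
  · exact zword a (by simp [braidWords]) (by rw [mul_assoc, ← sq, ← h2, hza.eq])
  · exact zword b (by simp [braidWords]) (by rw [mul_assoc, ← sq, hzb.eq])
  · exact word (a * b * a) (by simp [braidWords]) hbraid.symm
  · exact zword (a * b) (by simp [braidWords]) (by rw [mul_assoc, ← sq, (hza.mul_right hzb).eq])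
  · exact zword (b * a) (by simp [braidWords])
      (by rw [hbraid, mul_assoc, ← sq, ← h2, (hzb.mul_right hza).eq])

theorem closure_pair_subset_mul_braidWords (h2 : a ^ 2 = b ^ 2) (hbraid : a * b * a = b * a * b)
    (ha6 : a ^ 6 = 1) :
    (Submonoid.closure {a, b} : Set M) ⊆ {1, a ^ 2, (a ^ 2) ^ 2} * braidWords a b :=
  calc (Submonoid.closure {a, b} : Set M)
      ⊆ (Submonoid.powers (a ^ 2) : Set M) * braidWords a b :=
        Submonoid.closure_subset_mul_of_mul_mem (by simp [braidWords])
          (braidWords_mul_mem h2 hbraid)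
    _ ⊆ {1, a ^ 2, (a ^ 2) ^ 2} * braidWords a b :=
        Set.mul_subset_mul_right
          (Submonoid.coe_powers_subset_of_pow_three_eq_one (by rw [← pow_mul, ha6]))

end BraidRelations

theorem Algebra.finrank_adjoin_le_card {R A : Type*} [CommRing R] [StrongRankCondition R]
    [Semiring A] [Algebra R A] {s : Set A} {t : Finset A}
    (h : (Submonoid.closure s : Set A) ⊆ t) :
    Module.finrank R (Algebra.adjoin R s) ≤ t.card := by
  have hle : Subalgebra.toSubmodule (Algebra.adjoin R s) ≤ Submodule.span R t := by
    rw [Algebra.adjoin_eq_span]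
    exact Submodule.span_mono h
  calc Module.finrank R (Algebra.adjoin R s)
      = Module.finrank R (Subalgebra.toSubmodule (Algebra.adjoin R s)) := rfl
    _ ≤ Module.finrank R (Submodule.span R (t : Set A)) := Submodule.finrank_mono hle
    _ ≤ t.card := finrank_span_finset_le_card t

theorem stmt_16_general {k : Type*} [Field k] {n : ℕ}
    (A B : Matrix (Fin n) (Fin n) k)
    (h2 : A ^ 2 = B ^ 2) (hbraid : A * B * A = B * A * B)
    (hA6 : A ^ 6 = 1) :
    Module.finrank k (Algebra.adjoin k ({A, B} : Set (Matrix (Fin n) (Fin n) k))) ≤ 18 := by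
  classical
  let t : Finset (Matrix (Fin n) (Fin n) k) :=
    {1, A ^ 2, (A ^ 2) ^ 2} * {1, A, B, A * B, B * A, A * B * A}
  have hclosure : (Submonoid.closure {A, B} : Set (Matrix (Fin n) (Fin n) k)) ⊆ t := by
    simpa [t, braidWords] using closure_pair_subset_mul_braidWords h2 hbraid hA6
  calc Module.finrank k (Algebra.adjoin k {A, B})
      ≤ t.card := Algebra.finrank_adjoin_le_card hclosure
    _ ≤ 3 * 6 :=
      Finset.card_mul_le.trans (Nat.mul_le_mul Finset.card_le_three Finset.card_le_six)

theorem stmt_16 {k : Type*} [Field k] {n : ℕ}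
    (A B : Matrix (Fin n) (Fin n) k)
    (h2 : A ^ 2 = B ^ 2) (hbraid : A * B * A = B * A * B)
    (hA6 : A ^ 6 = 1) (hB6 : B ^ 6 = 1) :
    Module.finrank k (Algebra.adjoin k ({A, B} : Set (Matrix (Fin n) (Fin n) k))) ≤ 18 :=
  stmt_16_general A B h2 hbraid hA6
end

section
/- Let k have characteristic ≠ 2, and let X', Y' be the 6×6 matrices of the standard family with parameters c₁ = c₂ = −1 (X' block-diagonal with three swap blocks; Y' with nonzero entries Y'_{1,5}=−1, Y'_{2,6}=1, Y'_{3,1}=−1, Y'_{4,2}=1, Y'_{5,3}=−1, Y'_{6,4}=1). Then (X',Y') does not generate M_6(k) as a k-algebra. -/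
/-!
Grouping the coordinates in consecutive pairs, `X' = 1 ⊗ S` and `Y' = P ⊗ D` with `S` the swap,
`D = diag(-1, 1)` and `P` a cyclic permutation of the three pairs. Hence `P ⊗ 1`, which is not
scalar, commutes with both generators, so the algebra they generate lies in its centralizer.
-/

open Matrix

theorem Algebra.adjoin_ne_top_of_forall_commute {R A : Type*} [CommSemiring R] [Semiring A]
    [Algebra R A] {s : Set A} {m a : A} (hs : ∀ x ∈ s, Commute x m) (ha : ¬ Commute a m) :
    Algebra.adjoin R s ≠ ⊤ := by
  intro htop
  have hle : Algebra.adjoin R s ≤ Subalgebra.centralizer R {m} :=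
    Algebra.adjoin_le fun x hx => (Subalgebra.mem_centralizer_iff R).2 fun y hy => by
      rw [Set.mem_singleton_iff.1 hy]; exact (hs x hx).symm
  have hmem : a ∈ Subalgebra.centralizer R {m} := hle (htop ▸ Algebra.mem_top)
  exact ha ((Subalgebra.mem_centralizer_iff R).1 hmem m rfl).symm

theorem stmt_19_general {k : Type*} [Field k] :
    let X' : Matrix (Fin 6) (Fin 6) k :=
      !![0, 1, 0, 0, 0, 0;
         1, 0, 0, 0, 0, 0;
         0, 0, 0, 1, 0, 0;
         0, 0, 1, 0, 0, 0;
         0, 0, 0, 0, 0, 1;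
         0, 0, 0, 0, 1, 0]
    let Y' : Matrix (Fin 6) (Fin 6) k :=
      !![0, 0, 0, 0, -1, 0;
         0, 0, 0, 0, 0, 1;
         -1, 0, 0, 0, 0, 0;
         0, 1, 0, 0, 0, 0;
         0, 0, -1, 0, 0, 0;
         0, 0, 0, 1, 0, 0]
    Algebra.adjoin k ({X', Y'} : Set (Matrix (Fin 6) (Fin 6) k)) ≠ ⊤ := by
  intro X' Y'
  let M : Matrix (Fin 6) (Fin 6) k :=
    !![0, 0, 0, 0, 1, 0;
       0, 0, 0, 0, 0, 1;
       1, 0, 0, 0, 0, 0;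
       0, 1, 0, 0, 0, 0;
       0, 0, 1, 0, 0, 0;
       0, 0, 0, 1, 0, 0]
  have hX : Commute X' M := by
    ext i j; fin_cases i <;> fin_cases j <;> simp [X', M, mul_apply, Fin.sum_univ_succ]
  have hY : Commute Y' M := by
    ext i j; fin_cases i <;> fin_cases j <;> simp [Y', M, mul_apply, Fin.sum_univ_succ]
  have hE : ¬ Commute (single 0 0 1) M := fun h => by
    simpa [M, mul_apply, Fin.sum_univ_succ, single] using congr_fun (congr_fun h 0) 4
  refine Algebra.adjoin_ne_top_of_forall_commute ?_ hE
  rintro x (rfl | rfl)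
  exacts [hX, hY]

theorem stmt_19 {k : Type*} [Field k] (hchar : (2 : k) ≠ 0) :
    let X' : Matrix (Fin 6) (Fin 6) k :=
      !![0, 1, 0, 0, 0, 0;
         1, 0, 0, 0, 0, 0;
         0, 0, 0, 1, 0, 0;
         0, 0, 1, 0, 0, 0;
         0, 0, 0, 0, 0, 1;
         0, 0, 0, 0, 1, 0]
    let Y' : Matrix (Fin 6) (Fin 6) k :=
      !![0, 0, 0, 0, -1, 0;
         0, 0, 0, 0, 0, 1;
         -1, 0, 0, 0, 0, 0;
         0, 1, 0, 0, 0, 0;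
         0, 0, -1, 0, 0, 0;
         0, 0, 0, 1, 0, 0]
    Algebra.adjoin k ({X', Y'} : Set (Matrix (Fin 6) (Fin 6) k)) ≠ ⊤ :=
  stmt_19_general
end
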